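/- (Evolution estimate, Theorem 2.2.) Assume (X,d) is a proper, geodesic, non-branching complete separable metric space and that the Borel measure m satisfies the evolution estimate with rate f. Then for every compact Λ⊂Γ and every compact A⊂P₁(Λ), setting Λ̂:=(P₁(Λ)×P₂(Λ))∩Γ, one has m(A_{t,Λ̂}) ≥ f(t)·m(A) for all t∈[0,1]. -/

import Mathlib

open Set Metric MeasureTheory

/-- A geodesic parametrized on `[0,1]`: `d(γ_s,γ_t) = |s-t| · d(γ_0,γ_1)`. -/
def IsGeodesic {X : Type*} [MetricSpace X] (γ : ℝ → X) : Prop :=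
  ∀ s ∈ Set.Icc (0:ℝ) 1, ∀ t ∈ Set.Icc (0:ℝ) 1,
    dist (γ s) (γ t) = |s - t| * dist (γ 0) (γ 1)

/-- A geodesic metric space: every pair of points is joined by a geodesic. -/
def GeodesicMetricSpace (X : Type*) [MetricSpace X] : Prop :=
  ∀ x y : X, ∃ γ : ℝ → X, IsGeodesic γ ∧ γ 0 = x ∧ γ 1 = y

/-- Non-branching: two geodesics agreeing on `[0,t]` for some `t ∈ (0,1)` agree on `[0,1]`. -/
def NonBranching (X : Type*) [MetricSpace X] : Prop :=
  ∀ γ₁ γ₂ : ℝ → X, IsGeodesic γ₁ → IsGeodesic γ₂ →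
    ∀ t ∈ Set.Ioo (0:ℝ) 1, (∀ s ∈ Set.Icc (0:ℝ) t, γ₁ s = γ₂ s) →
      ∀ s ∈ Set.Icc (0:ℝ) 1, γ₁ s = γ₂ s

/-- The evolution set `A_{t,Λ} = {γ_t : γ geodesic, γ_0 ∈ A, (γ_0,γ_1) ∈ Λ}`. -/
def evoSet {X : Type*} [MetricSpace X] (A : Set X) (Λ : Set (X × X)) (t : ℝ) : Set X :=
  {z | ∃ γ : ℝ → X, IsGeodesic γ ∧ γ 0 ∈ A ∧ (γ 0, γ 1) ∈ Λ ∧ γ t = z}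

/-- `m` satisfies the evolution estimate with rate `f` (a consequence of `MCP(K,N)`):
`f : [0,1] → [0,1]` is continuous, `f(0) = 1`, and `m(E_{t,E×{y}}) ≥ f(t)·m(E)` for every
compact `E`, every `y` and every `t ∈ [0,1]`. -/
def EvolutionEstimate {X : Type*} [MetricSpace X] [MeasurableSpace X]
    (m : Measure X) (f : ℝ → ℝ) : Prop :=
  ContinuousOn f (Set.Icc 0 1) ∧ f 0 = 1 ∧
    (∀ t ∈ Set.Icc (0:ℝ) 1, f t ∈ Set.Icc (0:ℝ) 1) ∧
    ∀ E : Set X, IsCompact E → ∀ y : X, ∀ t ∈ Set.Icc (0:ℝ) 1,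
      ENNReal.ofReal (f t) * m E ≤ m (evoSet E (E ×ˢ ({y} : Set X)) t)

/-- The contact set `Γ = {(x,y) ∈ K × K : φ(x) + φᶜ(y) = c(x,y)}`. -/
def contactSet {X : Type*} [MetricSpace X] (h : ℝ → ℝ) (φ φc : X → ℝ) (K : Set X) :
    Set (X × X) :=
  {p | p.1 ∈ K ∧ p.2 ∈ K ∧ φ p.1 + φc p.2 = h (dist p.1 p.2)}

/-!
Take a finite net `N` of `P₂(Λ)` and cut `A` according to which point `u ∈ N` minimizes
`h (dist x u) - φᶜ u`. Moving each piece to its point, the evolution estimate holds piece by piece,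
and the moved pieces are disjoint: the minimization makes the pairs `c`-cyclically monotone, so by
strict convexity of `h` two of the geodesics could only meet at an interior time if one of them
could be continued to the other endpoint, which non-branching excludes. Refining the net, the
targets become `ε`-minimizers over `P₂(Λ)`; the corresponding evolved sets are compact and
decreasing, so the estimate passes to the exact minimizers, and an exact minimizer is paired with
`x` in the contact set because the partner of `x` in `Λ` attains `φ x`.
-/

open scoped ENNReal Function

section Geodesic

variable {X : Type*} [MetricSpace X]

def intermediatePoints (t : ℝ) (x y : X) : Set X :=
  {z | dist x z = t * dist x y ∧ dist z y = (1 - t) * dist x y}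

lemma intermediatePoints_zero (x y : X) : intermediatePoints 0 x y = {x} := by
  ext z
  simp only [intermediatePoints, zero_mul, sub_zero, one_mul, mem_ofPred_eq, mem_singleton_iff,
    dist_eq_zero]
  constructor
  · exact fun h => h.1.symm
  · rintro rfl
    exact ⟨rfl, rfl⟩

lemma intermediatePoints_one (x y : X) : intermediatePoints 1 x y = {y} := by
  ext z
  simp only [intermediatePoints, one_mul, sub_self, zero_mul, mem_ofPred_eq, mem_singleton_iff,
    dist_eq_zero]
  constructor
  · exact fun h => h.2
  · rintro rfl
    exact ⟨rfl, rfl⟩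

lemma IsGeodesic.mem_intermediatePoints {γ : ℝ → X} (hγ : IsGeodesic γ) {t : ℝ}
    (ht : t ∈ Icc (0 : ℝ) 1) : γ t ∈ intermediatePoints t (γ 0) (γ 1) := by
  constructor
  · rw [hγ 0 (left_mem_Icc.2 zero_le_one) t ht, zero_sub, abs_neg, abs_of_nonneg ht.1]
  · rw [hγ t ht 1 (right_mem_Icc.2 zero_le_one), abs_sub_comm, abs_of_nonneg (sub_nonneg.2 ht.2)]

lemma IsGeodesic.dist_comp_affine {γ : ℝ → X} (hγ : IsGeodesic γ) {a b s s' : ℝ} (hab : a < b)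
    (hs : s ∈ Icc a b) (hs' : s' ∈ Icc a b) :
    dist (γ ((s - a) / (b - a))) (γ ((s' - a) / (b - a))) =
      |s - s'| / (b - a) * dist (γ 0) (γ 1) := by
  have hba : 0 < b - a := sub_pos.2 hab
  have mem : ∀ r ∈ Icc a b, (r - a) / (b - a) ∈ Icc (0 : ℝ) 1 := fun r hr =>
    ⟨div_nonneg (by linarith [hr.1]) hba.le, (div_le_one hba).2 (by linarith [hr.2])⟩
  rw [hγ _ (mem s hs) _ (mem s' hs'), ← sub_div, abs_div, abs_of_pos hba, sub_sub_sub_cancel_right]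

lemma isGeodesic_of_dist_le {γ : ℝ → X} {D : ℝ}
    (hγ : ∀ s ∈ Icc (0 : ℝ) 1, ∀ s' ∈ Icc (0 : ℝ) 1, dist (γ s) (γ s') ≤ |s - s'| * D)
    (hD : D ≤ dist (γ 0) (γ 1)) : IsGeodesic γ := by
  have h0 : (0 : ℝ) ∈ Icc (0 : ℝ) 1 := left_mem_Icc.2 zero_le_one
  have h1 : (1 : ℝ) ∈ Icc (0 : ℝ) 1 := right_mem_Icc.2 zero_le_one
  have h01 : dist (γ 0) (γ 1) = D :=
    le_antisymm (by simpa using hγ 0 h0 1 h1) hD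
  intro s hs s' hs'
  wlog hss' : s ≤ s' generalizing s s'
  · rw [dist_comm, abs_sub_comm]
    exact this s' hs' s hs (le_of_not_ge hss')
  rw [h01, abs_of_nonpos (sub_nonpos.2 hss')]
  refine le_antisymm (by simpa [abs_of_nonpos (sub_nonpos.2 hss')] using hγ s hs s' hs') ?_
  have h0s := hγ 0 h0 s hs
  have hs'1 := hγ s' hs' 1 h1
  rw [zero_sub, abs_neg, abs_of_nonneg hs.1] at h0s
  rw [abs_of_nonpos (by linarith [hs'.2])] at hs'1
  have := dist_triangle4 (γ 0) (γ s) (γ s') (γ 1)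
  linarith

lemma dist_le_of_dist_le_on_pieces {γ : ℝ → X} {D t : ℝ} (ht : t ∈ Icc (0 : ℝ) 1)
    (h₁ : ∀ s ∈ Icc 0 t, ∀ s' ∈ Icc 0 t, dist (γ s) (γ s') ≤ |s - s'| * D)
    (h₂ : ∀ s ∈ Icc t 1, ∀ s' ∈ Icc t 1, dist (γ s) (γ s') ≤ |s - s'| * D) :
    ∀ s ∈ Icc (0 : ℝ) 1, ∀ s' ∈ Icc (0 : ℝ) 1, dist (γ s) (γ s') ≤ |s - s'| * D := by
  intro s hs s' hs'
  wlog hss' : s ≤ s' generalizing s s'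
  · rw [dist_comm, abs_sub_comm]
    exact this s' hs' s hs (le_of_not_ge hss')
  rcases le_total s' t with hs't | hts'
  · exact h₁ s ⟨hs.1, hss'.trans hs't⟩ s' ⟨hs'.1, hs't⟩
  rcases le_total t s with hts | hst
  · exact h₂ s ⟨hts, hs.2⟩ s' ⟨hts', hs'.2⟩
  have hst' := h₁ s ⟨hs.1, hst⟩ t ⟨ht.1, le_rfl⟩
  have hts'' := h₂ t ⟨le_rfl, ht.2⟩ s' ⟨hts', hs'.2⟩
  rw [abs_of_nonpos (sub_nonpos.2 hst)] at hst'
  rw [abs_of_nonpos (sub_nonpos.2 hts')] at hts''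
  rw [abs_of_nonpos (sub_nonpos.2 hss')]
  linarith [dist_triangle (γ s) (γ t) (γ s')]

lemma GeodesicMetricSpace.exists_isGeodesic_eqOn (hgeo : GeodesicMetricSpace X) {t D : ℝ}
    (ht : t ∈ Ioo (0 : ℝ) 1) {α : ℝ → X} {y : X}
    (hα : ∀ s ∈ Icc 0 t, ∀ s' ∈ Icc 0 t, dist (α s) (α s') ≤ |s - s'| * D)
    (hy : dist (α t) y ≤ (1 - t) * D) (hD : D ≤ dist (α 0) y) :
    ∃ η : ℝ → X, IsGeodesic η ∧ EqOn η α (Icc 0 t) ∧ η 1 = y := by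
  obtain ⟨σ, hσ, hσ0, hσ1⟩ := hgeo (α t) y
  have h1t : 0 < 1 - t := sub_pos.2 ht.2
  set η : ℝ → X := fun s => if s ≤ t then α s else σ ((s - t) / (1 - t)) with hη
  have hηα : EqOn η α (Icc 0 t) := fun s hs => if_pos hs.2
  have hησ : ∀ s ∈ Icc t 1, η s = σ ((s - t) / (1 - t)) := by
    intro s hs
    rcases eq_or_lt_of_le hs.1 with rfl | hts
    · simp [hη, hσ0]
    · exact if_neg (not_le.2 hts)
  have hη1 : η 1 = y := by rw [hησ 1 ⟨ht.2.le, le_rfl⟩, div_self h1t.ne', hσ1]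
  refine ⟨η, isGeodesic_of_dist_le (D := D) ?_ ?_, hηα, hη1⟩
  · refine dist_le_of_dist_le_on_pieces ⟨ht.1.le, ht.2.le⟩ ?_ ?_
    · intro s hs s' hs'
      rw [hηα hs, hηα hs']
      exact hα s hs s' hs'
    · intro s hs s' hs'
      rw [hησ s hs, hησ s' hs', hσ.dist_comp_affine ht.2 hs hs', hσ0, hσ1, div_mul_eq_mul_div,
        div_le_iff₀ h1t, mul_assoc]
      exact mul_le_mul_of_nonneg_left (hy.trans_eq (mul_comm _ _)) (abs_nonneg _)
  · rwa [hηα ⟨le_rfl, ht.1.le⟩, hη1]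

lemma GeodesicMetricSpace.exists_isGeodesic_apply_eq (hgeo : GeodesicMetricSpace X) {t : ℝ}
    (ht : t ∈ Icc (0 : ℝ) 1) {x y z : X} (hz : z ∈ intermediatePoints t x y) :
    ∃ γ : ℝ → X, IsGeodesic γ ∧ γ 0 = x ∧ γ 1 = y ∧ γ t = z := by
  obtain ⟨γ, hγ, hγ0, hγ1⟩ := hgeo x y
  rcases eq_or_lt_of_le ht.1 with rfl | ht0
  · rw [intermediatePoints_zero] at hz
    exact ⟨γ, hγ, hγ0, hγ1, hγ0.trans hz.symm⟩
  rcases eq_or_lt_of_le ht.2 with rfl | ht1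
  · rw [intermediatePoints_one] at hz
    exact ⟨γ, hγ, hγ0, hγ1, hγ1.trans hz.symm⟩
  obtain ⟨β, hβ, hβ0, hβ1⟩ := hgeo x z
  have hβt : ∀ s, β ((s - 0) / (t - 0)) = β (s / t) := fun s => by simp only [sub_zero]
  obtain ⟨η, hη, hηβ, hη1⟩ := hgeo.exists_isGeodesic_eqOn (D := dist x y) ⟨ht0, ht1⟩
    (α := fun s => β (s / t)) (y := y) (fun s hs s' hs' => by
      rw [← hβt, ← hβt, hβ.dist_comp_affine ht0 hs hs', hβ0, hβ1, hz.1, sub_zero,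
        div_mul_eq_mul_div, mul_div_assoc, mul_div_cancel_left₀ _ ht0.ne'])
    (by simpa [div_self ht0.ne', hβ1] using hz.2.le) (by simp [hβ0])
  refine ⟨η, hη, ?_, hη1, ?_⟩
  · simpa [hβ0] using hηβ (left_mem_Icc.2 ht0.le)
  · simpa [div_self ht0.ne', hβ1] using hηβ (right_mem_Icc.2 ht0.le)

lemma GeodesicMetricSpace.mem_evoSet_iff (hgeo : GeodesicMetricSpace X) {A : Set X}
    {Λ : Set (X × X)} {t : ℝ} (ht : t ∈ Icc (0 : ℝ) 1) {z : X} :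
    z ∈ evoSet A Λ t ↔ ∃ p ∈ Λ, p.1 ∈ A ∧ z ∈ intermediatePoints t p.1 p.2 := by
  constructor
  · rintro ⟨γ, hγ, hγA, hγΛ, rfl⟩
    exact ⟨_, hγΛ, hγA, hγ.mem_intermediatePoints ht⟩
  · rintro ⟨p, hpΛ, hpA, hz⟩
    obtain ⟨γ, hγ, hγ0, hγ1, hγt⟩ := hgeo.exists_isGeodesic_apply_eq ht hz
    exact ⟨γ, hγ, hγ0 ▸ hpA, by rwa [hγ0, hγ1], hγt⟩

lemma evoSet_mono {A A' : Set X} {Λ Λ' : Set (X × X)} (hA : A ⊆ A') (hΛ : Λ ⊆ Λ') (t : ℝ) :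
    evoSet A Λ t ⊆ evoSet A' Λ' t :=
  fun _ ⟨γ, hγ, hγA, hγΛ, hγt⟩ => ⟨γ, hγ, hA hγA, hΛ hγΛ, hγt⟩

end Geodesic

section Cost

lemma ConvexOn.continuousOn_Ici_of_monotoneOn {h : ℝ → ℝ} {a : ℝ} (hconv : ConvexOn ℝ (Ici a) h)
    (hmono : MonotoneOn h (Ici a)) : ContinuousOn h (Ici a) := by
  refine hconv.continuousOn_Ici ?_
  have hup : ∀ x ∈ Icc a (a + 1), h x ≤ h a + (x - a) * (h (a + 1) - h a) := by
    intro x hx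
    have := hconv.2 self_mem_Ici (show a + 1 ∈ Ici a by simp) (by linarith [hx.2] : 0 ≤ 1 - (x - a))
      (sub_nonneg.2 hx.1) (by ring)
    simp only [smul_eq_mul, show (1 - (x - a)) * a + (x - a) * (a + 1) = x by ring] at this
    linarith
  refine tendsto_of_tendsto_of_tendsto_of_le_of_le' tendsto_const_nhds
    (h := fun x => h a + (x - a) * (h (a + 1) - h a)) ?_ ?_ ?_
  · exact ((Continuous.tendsto (by fun_prop) a).mono_left nhdsWithin_le_nhds).trans_eq (by simp)
  · filter_upwards [self_mem_nhdsWithin] with x hx using hmono self_mem_Ici hx hx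
  · filter_upwards [Icc_mem_nhdsGE (lt_add_one a)] with x hx using hup x hx

lemma StrictConvexOn.strictMonoOn_of_monotoneOn {h : ℝ → ℝ} {s : Set ℝ}
    (hconv : StrictConvexOn ℝ s h) (hmono : MonotoneOn h s) : StrictMonoOn h s := by
  intro x hx y hy hxy
  by_contra! hyx
  have hmid := hconv.1 hx hy (by norm_num : (0 : ℝ) ≤ 1 / 2) (by norm_num : (0 : ℝ) ≤ 1 / 2)
    (by norm_num)
  have hlt := hconv.2 hx hy hxy.ne (by norm_num : (0 : ℝ) < 1 / 2) (by norm_num : (0 : ℝ) < 1 / 2)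
    (by norm_num)
  have hle := hmono hx hmid (by simp only [smul_eq_mul]; linarith)
  simp only [smul_eq_mul] at hlt hle
  linarith

lemma StrictConvexOn.eq_of_add_le_add {h : ℝ → ℝ} (hconv : StrictConvexOn ℝ (Ici 0) h)
    (hmono : MonotoneOn h (Ici 0)) {a b p q t : ℝ} (ht : t ∈ Ioo (0 : ℝ) 1) (ha : 0 ≤ a)
    (hb : 0 ≤ b) (hp : 0 ≤ p) (hq : 0 ≤ q) (hpab : p ≤ t * a + (1 - t) * b)
    (hqab : q ≤ t * b + (1 - t) * a) (hcost : h a + h b ≤ h p + h q) : a = b ∧ p = a := by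
  have h1t : 0 < 1 - t := sub_pos.2 ht.2
  have hab : a = b := by
    by_contra hne
    have s₁ := hconv.2 ha hb hne ht.1 h1t (by ring)
    have s₂ := hconv.2 hb ha (Ne.symm hne) ht.1 h1t (by ring)
    have m₁ := hmono hp (mem_Ici.2 (by nlinarith)) hpab
    have m₂ := hmono hq (mem_Ici.2 (by nlinarith)) hqab
    simp only [smul_eq_mul] at s₁ s₂
    linarith
  subst hab
  have hpa : p ≤ a := by linarith
  have hqa : q ≤ a := by linarith
  have hhp := hmono hp ha hpa
  have hhq := hmono hq ha hqa
  exact ⟨rfl, (hconv.strictMonoOn_of_monotoneOn hmono).injOn hp ha (by linarith)⟩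

end Cost

section Rigidity

variable {X : Type*} [MetricSpace X] {h : ℝ → ℝ}

/-- The crossed pairs are optimal too, so the geodesic from `x` through `z` can be continued to
`y'`, and non-branching forces `y = y'`. -/
theorem NonBranching.eq_of_mem_intermediatePoints (hnb : NonBranching X)
    (hgeo : GeodesicMetricSpace X) (hconv : StrictConvexOn ℝ (Ici 0) h)
    (hmono : MonotoneOn h (Ici 0)) {t : ℝ} (ht : t ∈ Ioo (0 : ℝ) 1) {x x' y y' z : X}
    (hz : z ∈ intermediatePoints t x y) (hz' : z ∈ intermediatePoints t x' y')
    (hcost : h (dist x y) + h (dist x' y') ≤ h (dist x y') + h (dist x' y)) : y = y' := by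
  obtain ⟨hab, hxy'⟩ := hconv.eq_of_add_le_add hmono ht dist_nonneg dist_nonneg dist_nonneg
    dist_nonneg (by linarith [dist_triangle x z y', hz.1, hz'.2])
    (by linarith [dist_triangle x' z y, hz'.1, hz.2]) hcost
  obtain ⟨γ, hγ, hγ0, hγ1, hγt⟩ := hgeo.exists_isGeodesic_apply_eq (Ioo_subset_Icc_self ht) hz
  obtain ⟨η, hη, hηγ, hη1⟩ := hgeo.exists_isGeodesic_eqOn ht (α := γ) (y := y')
    (D := dist x y)
    (fun s hs s' hs' => by
      rw [hγ s (Icc_subset_Icc_right ht.2.le hs) s' (Icc_subset_Icc_right ht.2.le hs'), hγ0, hγ1])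
    (by rw [hγt, hz'.2, ← hab]) (by rw [hγ0, hxy'])
  rw [← hγ1, ← hη1]
  exact hnb γ η hγ hη t ht (fun s hs => (hηγ hs).symm) 1 (right_mem_Icc.2 zero_le_one)

theorem NonBranching.disjoint_evoSet (hnb : NonBranching X) (hgeo : GeodesicMetricSpace X)
    (hconv : StrictConvexOn ℝ (Ici 0) h) (hmono : MonotoneOn h (Ici 0)) {t : ℝ}
    (ht : t ∈ Icc (0 : ℝ) 1) {E E' : Set X} {y y' : X} (hE : Disjoint E E') (hy : y ≠ y')
    (hcost : ∀ x ∈ E, ∀ x' ∈ E', h (dist x y) + h (dist x' y') ≤ h (dist x y') + h (dist x' y)) :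
    Disjoint (evoSet E (E ×ˢ {y}) t) (evoSet E' (E' ×ˢ {y'}) t) := by
  rw [Set.disjoint_left]
  rintro z ⟨γ, hγ, hγE, ⟨-, hγy : γ 1 = y⟩, rfl⟩ ⟨γ', hγ', hγ'E, ⟨-, hγ'y : γ' 1 = y'⟩, hz⟩
  have hzγ := hγ.mem_intermediatePoints ht
  have hzγ' := hz ▸ hγ'.mem_intermediatePoints ht
  rw [hγy] at hzγ
  rw [hγ'y] at hzγ'
  rcases eq_or_lt_of_le ht.1 with rfl | ht0
  · rw [intermediatePoints_zero] at hzγ hzγ'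
    exact hE.ne_of_mem hγE hγ'E (hzγ.symm.trans hzγ')
  rcases eq_or_lt_of_le ht.2 with rfl | ht1
  · rw [intermediatePoints_one] at hzγ hzγ'
    exact hy (hzγ.symm.trans hzγ')
  exact hy (hnb.eq_of_mem_intermediatePoints hgeo hconv hmono ⟨ht0, ht1⟩ hzγ hzγ'
    (hcost _ hγE _ hγ'E))

end Rigidity

section Compactness

variable {X : Type*} [MetricSpace X]

lemma isClosed_setOf_mem_intermediatePoints {α : Type*} [TopologicalSpace α] (t : ℝ)
    {x y z : α → X} (hx : Continuous x) (hy : Continuous y) (hz : Continuous z) :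
    IsClosed {a | z a ∈ intermediatePoints t (x a) (y a)} :=
  (isClosed_eq (hx.dist hz) (continuous_const.mul (hx.dist hy))).inter
    (isClosed_eq (hz.dist hy) (continuous_const.mul (hx.dist hy)))

lemma GeodesicMetricSpace.isCompact_evoSet [ProperSpace X] (hgeo : GeodesicMetricSpace X)
    {A : Set X} {Λ : Set (X × X)} (hA : IsClosed A) (hΛ : IsCompact Λ) {t : ℝ}
    (ht : t ∈ Icc (0 : ℝ) 1) : IsCompact (evoSet A Λ t) := by
  obtain ⟨R, hR⟩ := hΛ.exists_bound_of_continuousOn (f := fun p : X × X => dist p.1 p.2)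
    continuous_dist.continuousOn
  set Q : Set ((X × X) × X) := {q | q.1 ∈ Λ ∧ q.1.1 ∈ A ∧ q.2 ∈ intermediatePoints t q.1.1 q.1.2}
  have hQ : IsCompact Q := by
    refine (hΛ.prod ((hΛ.image continuous_fst).cthickening (r := R))).of_isClosed_subset
      ((hΛ.isClosed.preimage continuous_fst).inter ((hA.preimage (by fun_prop)).inter
        (isClosed_setOf_mem_intermediatePoints t (by fun_prop) (by fun_prop) (by fun_prop)))) ?_
    rintro ⟨p, z⟩ ⟨hp, -, hz⟩
    refine ⟨hp, mem_cthickening_of_dist_le z p.1 R _ (mem_image_of_mem _ hp) ?_⟩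
    have hpR := (hR p hp).trans' (le_abs_self _)
    rw [dist_comm, hz.1]
    nlinarith [ht.2, dist_nonneg (x := p.1) (y := p.2)]
  convert hQ.image continuous_snd using 1
  ext z
  rw [hgeo.mem_evoSet_iff ht]
  constructor
  · rintro ⟨p, hp, hpA, hz⟩
    exact ⟨(p, z), ⟨hp, hpA, hz⟩, rfl⟩
  · rintro ⟨⟨p, z⟩, ⟨hp, hpA, hz⟩, rfl⟩
    exact ⟨p, hp, hpA, hz⟩

lemma GeodesicMetricSpace.iInter_evoSet_subset (hgeo : GeodesicMetricSpace X) {A : Set X}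
    (hA : IsClosed A) {Λ : ℕ → Set (X × X)} (hΛ : ∀ n, IsCompact (Λ n)) (hanti : Antitone Λ)
    {t : ℝ} (ht : t ∈ Icc (0 : ℝ) 1) : ⋂ n, evoSet A (Λ n) t ⊆ evoSet A (⋂ n, Λ n) t := by
  intro z hz
  set W : ℕ → Set (X × X) := fun n => {p | p ∈ Λ n ∧ p.1 ∈ A ∧ z ∈ intermediatePoints t p.1 p.2}
  have hW : ∀ n, IsClosed (W n) := fun n =>
    (hΛ n).isClosed.inter ((hA.preimage continuous_fst).inter
      (isClosed_setOf_mem_intermediatePoints t continuous_fst continuous_snd continuous_const))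
  obtain ⟨p, hp⟩ := IsCompact.nonempty_iInter_of_sequence_nonempty_isCompact_isClosed W
    (fun n _ hp => ⟨hanti n.le_succ hp.1, hp.2⟩)
    (fun n => (hgeo.mem_evoSet_iff ht).1 (mem_iInter.1 hz n))
    ((hΛ 0).of_isClosed_subset (hW 0) fun _ hp => hp.1) hW
  rw [mem_iInter] at hp
  exact (hgeo.mem_evoSet_iff ht).2 ⟨p, mem_iInter.2 fun n => (hp n).1, (hp 0).2⟩

end Compactness

section AlmostMinimizers

variable {X : Type*}

def almostMinimizers (g : X → X → ℝ) (A B : Set X) (ε : ℝ) : Set (X × X) :=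
  {p | p.1 ∈ A ∧ p.2 ∈ B ∧ ∀ y ∈ B, g p.1 p.2 ≤ g p.1 y + ε}

lemma almostMinimizers_mono {g : X → X → ℝ} {A B : Set X} {ε ε' : ℝ} (hε : ε ≤ ε') :
    almostMinimizers g A B ε ⊆ almostMinimizers g A B ε' :=
  fun _ ⟨hA, hB, hmin⟩ => ⟨hA, hB, fun y hy => (hmin y hy).trans (by linarith)⟩

lemma iInter_almostMinimizers_subset {g : X → X → ℝ} {A B : Set X} :
    ⋂ n : ℕ, almostMinimizers g A B (1 / (n + 1)) ⊆ almostMinimizers g A B 0 := by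
  intro p hp
  rw [mem_iInter] at hp
  refine ⟨(hp 0).1, (hp 0).2.1, fun y hy => ?_⟩
  have hlim := tendsto_const_nhds (x := g p.1 y).add tendsto_one_div_add_atTop_nhds_zero_nat
  exact ge_of_tendsto' hlim fun n => (hp n).2.2 y hy

lemma isCompact_almostMinimizers [TopologicalSpace X] [T2Space X] {g : X → X → ℝ} {A B : Set X}
    (hA : IsCompact A) (hB : IsCompact B) (hg : ContinuousOn (Function.uncurry g) (A ×ˢ B))
    (ε : ℝ) : IsCompact (almostMinimizers g A B ε) := by
  have hAB := (hA.prod hB).isClosed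
  have heq : almostMinimizers g A B ε =
      (A ×ˢ B) ∩ ⋂ y ∈ B, {p ∈ A ×ˢ B | g p.1 p.2 ≤ g p.1 y + ε} := by
    ext p
    simp only [almostMinimizers, mem_inter_iff, mem_iInter, mem_prod, mem_ofPred_eq]
    constructor
    · rintro ⟨hpA, hpB, hmin⟩
      exact ⟨⟨hpA, hpB⟩, fun y hy => ⟨⟨hpA, hpB⟩, hmin y hy⟩⟩
    · rintro ⟨hp, hmin⟩
      exact ⟨hp.1, hp.2, fun y hy => (hmin y hy).2⟩
  refine (hA.prod hB).of_isClosed_subset ?_ fun p hp => ⟨hp.1, hp.2.1⟩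
  rw [heq]
  refine hAB.inter (isClosed_biInter fun y hy => hAB.isClosed_le hg ?_)
  exact (hg.comp (continuousOn_fst.prodMk continuousOn_const) fun p hp => ⟨hp.1, hy⟩).add
    continuousOn_const

lemma exists_finset_almostMinimizers_subset [PseudoMetricSpace X] {g : X → X → ℝ} {A B : Set X}
    (hB : IsCompact B) (hBne : B.Nonempty) (hg : UniformContinuousOn (Function.uncurry g) (A ×ˢ B))
    {ε : ℝ} (hε : 0 < ε) :
    ∃ N : Finset X, N.Nonempty ∧ almostMinimizers g A N 0 ⊆ almostMinimizers g A B ε := by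
  obtain ⟨δ, hδ, hgδ⟩ := Metric.uniformContinuousOn_iff.1 hg ε hε
  obtain ⟨N, hNB, hBN⟩ := hB.elim_nhds_subcover (fun y => ball y δ) fun y _ => ball_mem_nhds y hδ
  have hnet : ∀ y ∈ B, ∃ y' ∈ N, dist y y' < δ := fun y hy => by
    simpa only [mem_iUnion, mem_ball, exists_prop] using hBN hy
  refine ⟨N, ?_, ?_⟩
  · obtain ⟨y, hy⟩ := hBne
    obtain ⟨y', hy', -⟩ := hnet y hy
    exact ⟨y', hy'⟩
  rintro ⟨x, u⟩ ⟨hx, hu, hmin⟩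
  refine ⟨hx, hNB u hu, fun y hy => ?_⟩
  obtain ⟨y', hy', hyy'⟩ := hnet y hy
  have hclose := hgδ (x, y) ⟨hx, hy⟩ (x, y') ⟨hx, hNB y' hy'⟩
    (by simpa [Prod.dist_eq] using hyy')
  rw [Real.dist_eq, abs_lt] at hclose
  have := hmin y' hy'
  simp only [Function.uncurry_apply_pair] at hclose this
  linarith

end AlmostMinimizers

section Measure

variable {X : Type*} [TopologicalSpace X] [MeasurableSpace X] [OpensMeasurableSpace X]
  [T2Space X]

theorem IsCompact.exists_isCompact_disjoint_le_sum_add (m : Measure X)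
    [IsFiniteMeasureOnCompacts m] [m.InnerRegularCompactLTTop] {ι : Type*} [Fintype ι]
    {A : Set X} (hA : IsCompact A) {C : ι → Set X} (hC : ∀ i, MeasurableSet (C i))
    (hAC : A ⊆ ⋃ i, C i) {δ : ℝ≥0∞} (hδ : δ ≠ 0) :
    ∃ F : ι → Set X, (∀ i, IsCompact (F i) ∧ F i ⊆ A ∩ C i) ∧ Pairwise (Disjoint on F) ∧
      m A ≤ ∑ i, m (F i) + δ := by
  set e := Fintype.equivFin ι
  set D := disjointed fun k => A ∩ C (e.symm k)
  have hDm : ∀ k, MeasurableSet (D k) := fun k =>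
    disjointedRec (fun _ _ hs => hs.diff (hA.measurableSet.inter (hC _)))
      (hA.measurableSet.inter (hC _))
  have hDA : ∀ k, D k ⊆ A ∩ C (e.symm k) := disjointed_subset _
  have hAD : A = ⋃ k, D k := by
    rw [iUnion_disjointed, ← inter_iUnion, e.symm.surjective.iUnion_comp C, inter_eq_left.2 hAC]
  have hδn : δ / Fintype.card ι ≠ 0 := (ENNReal.div_pos hδ (ENNReal.natCast_ne_top _)).ne'
  choose F hFD hF hmF using fun k => (hDm k).exists_isCompact_lt_add
    ((measure_mono ((hDA k).trans inter_subset_left)).trans_lt (hA.measure_lt_top (μ := m))).ne hδn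
  refine ⟨fun i => F (e i), fun i => ⟨hF _, (hFD _).trans (by simpa using hDA (e i))⟩,
    fun i j hij => (disjoint_disjointed _ (e.injective.ne hij)).mono (hFD _) (hFD _), ?_⟩
  calc m A = ∑ k, m (D k) := by
        conv_lhs => rw [hAD]
        rw [measure_iUnion (disjoint_disjointed _) hDm, tsum_fintype]
    _ ≤ ∑ k, (m (F k) + δ / Fintype.card ι) := Finset.sum_le_sum fun k _ => (hmF k).le
    _ = ∑ i, m (F (e i)) + Fintype.card ι * (δ / Fintype.card ι) := by
        rw [Finset.sum_add_distrib, e.sum_comp (fun k => m (F k)), Finset.sum_const,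
          Finset.card_univ, Fintype.card_fin, nsmul_eq_mul]
    _ ≤ ∑ i, m (F (e i)) + δ := by gcongr; exact ENNReal.mul_div_le

end Measure

lemma almostMinimizers_subset_contactSet {X : Type*} [MetricSpace X] {h : ℝ → ℝ} {φ φc : X → ℝ}
    {K : Set X}    (hpot : ∀ x ∈ K, ∀ y ∈ K, φ x + φc y ≤ h (dist x y)) {Λ : Set (X × X)}
    (hΛ : Λ ⊆ contactSet h φ φc K) {A : Set X} (hA : A ⊆ Prod.fst '' Λ) :
    almostMinimizers (fun x y => h (dist x y) - φc y) A (Prod.snd '' Λ) 0 ⊆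
      ((Prod.fst '' Λ) ×ˢ (Prod.snd '' Λ)) ∩ contactSet h φ φc K := by
  rintro ⟨x, u⟩ ⟨hx, hu, hmin⟩
  obtain ⟨p, hp, rfl⟩ := hA hx
  obtain ⟨hxK, -, hφp⟩ := hΛ hp
  have huK : u ∈ K := by
    obtain ⟨q, hq, rfl⟩ := hu
    exact (hΛ hq).2.1
  have hxu := hmin p.2 ⟨p, hp, rfl⟩
  exact ⟨⟨hA hx, hu⟩, hxK, huK, le_antisymm (hpot _ hxK u huK) (by linarith)⟩

section Evolution

variable {X : Type*} [MetricSpace X] [ProperSpace X] [MeasurableSpace X] [BorelSpace X]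
  {m : Measure X} [IsFiniteMeasureOnCompacts m] {h : ℝ → ℝ}

theorem EvolutionEstimate.le_measure_evoSet_almostMinimizers {f : ℝ → ℝ}
    (hm : EvolutionEstimate m f) (hgeo : GeodesicMetricSpace X) (hnb : NonBranching X)
    (hconv : StrictConvexOn ℝ (Ici 0) h) (hmono : MonotoneOn h (Ici 0)) (ψ : X → ℝ) {A : Set X}
    (hA : IsCompact A) {N : Finset X} (hN : N.Nonempty) {t : ℝ} (ht : t ∈ Icc (0 : ℝ) 1) :
    ENNReal.ofReal (f t) * m A ≤
      m (evoSet A (almostMinimizers (fun x y => h (dist x y) - ψ y) A N 0) t) := by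
  obtain ⟨-, -, hf, hmE⟩ := hm
  set g : X → X → ℝ := fun x y => h (dist x y) - ψ y
  have hg : ∀ y, Continuous fun x => g x y := fun y =>
    ((hconv.convexOn.continuousOn_Ici_of_monotoneOn hmono).comp_continuous
      (continuous_id.dist continuous_const) fun _ => dist_nonneg).sub continuous_const
  set C : N → Set X := fun i => {x | ∀ j : N, g x i ≤ g x j}
  have hC : ∀ i, IsClosed (C i) := fun i => by
    simpa only [C, ofPred_forall] using isClosed_iInter fun j : N => isClosed_le (hg i) (hg j)
  have hAC : A ⊆ ⋃ i, C i := fun x _ => by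
    obtain ⟨i, hi, hmin⟩ := N.exists_min_image (g x) hN
    exact mem_iUnion.2 ⟨⟨i, hi⟩, fun j => hmin j j.2⟩
  refine ENNReal.le_of_forall_pos_le_add fun δ hδ _ => ?_
  obtain ⟨F, hF, hFdisj, hAF⟩ := hA.exists_isCompact_disjoint_le_sum_add m
    (fun i => (hC i).measurableSet) hAC (ENNReal.coe_ne_zero.2 hδ.ne')
  set S : N → Set X := fun i => evoSet (F i) (F i ×ˢ {(i : X)}) t
  have hS : ∀ i, IsCompact (S i) := fun i =>
    hgeo.isCompact_evoSet (hF i).1.isClosed ((hF i).1.prod isCompact_singleton) ht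
  have hSdisj : Pairwise (Disjoint on S) := fun i j hij =>
    hnb.disjoint_evoSet hgeo hconv hmono ht (hFdisj hij) (Subtype.coe_injective.ne hij)
      fun x hx x' hx' => by
        have hi := ((hF i).2 hx).2 j
        have hj := ((hF j).2 hx').2 i
        simp only [g] at hi hj
        linarith
  have hST : ⋃ i, S i ⊆ evoSet A (almostMinimizers g A N 0) t := by
    refine iUnion_subset fun i => evoSet_mono (fun x hx => ((hF i).2 hx).1) ?_ t
    rintro ⟨x, _⟩ ⟨hx, rfl⟩
    exact ⟨((hF i).2 hx).1, i.2, fun y hy => by simpa using ((hF i).2 hx).2 ⟨y, hy⟩⟩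
  have hft : ENNReal.ofReal (f t) ≤ 1 := ENNReal.ofReal_le_one.2 (hf t ht).2
  calc ENNReal.ofReal (f t) * m A ≤ ENNReal.ofReal (f t) * (∑ i, m (F i) + δ) := by gcongr
    _ ≤ ∑ i, m (S i) + δ := by
        rw [mul_add, Finset.mul_sum]
        gcongr with i
        · exact hmE _ (hF i).1 _ t ht
        · exact mul_le_of_le_one_left' hft
    _ = m (⋃ i, S i) + δ := by
        rw [measure_iUnion hSdisj fun i => (hS i).measurableSet, tsum_fintype]
    _ ≤ _ := by gcongr

theorem GeodesicMetricSpace.le_measure_evoSet_almostMinimizers_zero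
    (hgeo : GeodesicMetricSpace X) {g : X → X → ℝ} {A B : Set X} (hA : IsCompact A)
    (hB : IsCompact B) (hg : ContinuousOn (Function.uncurry g) (A ×ˢ B)) {t : ℝ}
    (ht : t ∈ Icc (0 : ℝ) 1) {c : ℝ≥0∞}
    (hc : ∀ ε > 0, c ≤ m (evoSet A (almostMinimizers g A B ε) t)) :
    c ≤ m (evoSet A (almostMinimizers g A B 0) t) := by
  set Λ : ℕ → Set (X × X) := fun n => almostMinimizers g A B (1 / (n + 1))
  have hΛ : ∀ n, IsCompact (Λ n) := fun n => isCompact_almostMinimizers hA hB hg _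
  have hanti : Antitone Λ := fun n k hnk => almostMinimizers_mono
    (one_div_le_one_div_of_le (by positivity) (by exact_mod_cast Nat.add_le_add_right hnk 1))
  have hE : ∀ n, IsCompact (evoSet A (Λ n) t) := fun n =>
    hgeo.isCompact_evoSet hA.isClosed (hΛ n) ht
  have hEanti : Antitone fun n => evoSet A (Λ n) t := fun n k hnk =>
    evoSet_mono subset_rfl (hanti hnk) t
  calc c ≤ ⨅ n, m (evoSet A (Λ n) t) := le_iInf fun n => hc _ (by positivity)
    _ = m (⋂ n, evoSet A (Λ n) t) := (hEanti.measure_iInter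
        (fun n => (hE n).measurableSet.nullMeasurableSet) ⟨0, (hE 0).measure_lt_top.ne⟩).symm
    _ ≤ m (evoSet A (⋂ n, Λ n) t) :=
        measure_mono (hgeo.iInter_evoSet_subset hA.isClosed hΛ hanti ht)
    _ ≤ _ := measure_mono (evoSet_mono subset_rfl iInter_almostMinimizers_subset t)

end Evolution

theorem evolution_estimate_general
    {X : Type*} [MetricSpace X] [ProperSpace X]
    [MeasurableSpace X] [BorelSpace X]
    (hgeo : GeodesicMetricSpace X) (hnb : NonBranching X)
    (m : Measure X) [IsFiniteMeasureOnCompacts m]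
    (f : ℝ → ℝ) (hm : EvolutionEstimate m f)
    (h : ℝ → ℝ) (hconv : StrictConvexOn ℝ (Set.Ici (0:ℝ)) h)
    (hmono : MonotoneOn h (Set.Ici (0:ℝ)))
    (K : Set X)
    (φ φc : X → ℝ) (hφc : ContinuousOn φc K)
    (hpot : ∀ x ∈ K, ∀ y ∈ K, φ x + φc y ≤ h (dist x y))
    (Λ : Set (X × X)) (hΛcpt : IsCompact Λ) (hΛΓ : Λ ⊆ contactSet h φ φc K)
    (A : Set X) (hA : IsCompact A) (hAsub : A ⊆ Prod.fst '' Λ)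
    (t : ℝ) (ht : t ∈ Set.Icc (0:ℝ) 1) :
    ENNReal.ofReal (f t) * m A ≤
      m (evoSet A (((Prod.fst '' Λ) ×ˢ (Prod.snd '' Λ)) ∩ contactSet h φ φc K) t) := by
  rcases A.eq_empty_or_nonempty with rfl | ⟨x, hx⟩
  · simp
  set P := Prod.snd '' Λ
  have hP : IsCompact P := hΛcpt.image continuous_snd
  have hPK : P ⊆ K := image_subset_iff.2 fun p hp => (hΛΓ hp).2.1
  have hPne : P.Nonempty := by
    obtain ⟨p, hp, -⟩ := hAsub hx
    exact ⟨p.2, p, hp, rfl⟩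
  have hg : ContinuousOn (Function.uncurry fun x y => h (dist x y) - φc y) (A ×ˢ P) :=
    ((hconv.convexOn.continuousOn_Ici_of_monotoneOn hmono).comp_continuous continuous_dist
      fun _ => dist_nonneg).continuousOn.sub
      (hφc.comp continuousOn_snd fun p hp => hPK hp.2)
  calc ENNReal.ofReal (f t) * m A
      ≤ m (evoSet A (almostMinimizers (fun x y => h (dist x y) - φc y) A P 0) t) :=
        hgeo.le_measure_evoSet_almostMinimizers_zero hA hP hg ht fun ε hε => by
          obtain ⟨N, hN, hNP⟩ := exists_finset_almostMinimizers_subset hP hPne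
            ((hA.prod hP).uniformContinuousOn_of_continuous hg) hε
          exact (hm.le_measure_evoSet_almostMinimizers hgeo hnb hconv hmono φc hA hN ht).trans
            (measure_mono (evoSet_mono subset_rfl hNP t))
    _ ≤ _ := measure_mono
        (evoSet_mono subset_rfl (almostMinimizers_subset_contactSet hpot hΛΓ hAsub) t)

theorem evolution_estimate
    {X : Type*} [MetricSpace X] [ProperSpace X] [CompleteSpace X]
    [TopologicalSpace.SeparableSpace X] [MeasurableSpace X] [BorelSpace X]
    (hgeo : GeodesicMetricSpace X) (hnb : NonBranching X)
    (m : Measure X) [IsFiniteMeasureOnCompacts m]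
    (f : ℝ → ℝ) (hm : EvolutionEstimate m f)
    (h : ℝ → ℝ) (hconv : StrictConvexOn ℝ (Set.Ici (0:ℝ)) h)
    (hmono : MonotoneOn h (Set.Ici (0:ℝ))) (hpos : ∀ x ∈ Set.Ici (0:ℝ), 0 ≤ h x)
    (K : Set X) (hK : IsCompact K)
    (φ φc : X → ℝ) (hφ : ContinuousOn φ K) (hφc : ContinuousOn φc K)
    (hpot : ∀ x ∈ K, ∀ y ∈ K, φ x + φc y ≤ h (dist x y))
    (Λ : Set (X × X)) (hΛcpt : IsCompact Λ) (hΛΓ : Λ ⊆ contactSet h φ φc K)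
    (A : Set X) (hA : IsCompact A) (hAsub : A ⊆ Prod.fst '' Λ)
    (t : ℝ) (ht : t ∈ Set.Icc (0:ℝ) 1) :
    ENNReal.ofReal (f t) * m A ≤
      m (evoSet A (((Prod.fst '' Λ) ×ˢ (Prod.snd '' Λ)) ∩ contactSet h φ φc K) t) :=
  evolution_estimate_general hgeo hnb m f hm h hconv hmono K φ φc hφc hpot Λ hΛcpt hΛΓ A hA hAsub t
    ht
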